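/- Let V be an n×n symmetric positive semidefinite matrix with v_{ii} = ∑_{j≠i} v_{ij}, v_{ij} ≥ m > 0 for i ≠ j, and n ≥ 2. Then for any x ∈ ℝ^n, xᵀVx ≥ m ∑_{i<j} (x_i + x_j)² ; in particular if n ≥ 3, xᵀVx = 0 implies x = 0, so V is positive definite and invertible. -/

import Mathlib

/-!
Subtracting the balanced diagonal `v_ii = ∑_{j ≠ i} v_ij` rewrites the quadratic form as
`xᵀVx = ∑_{i<j} v_ij (x_i + x_j)²`, a sum of nonnegative terms with weights `v_ij ≥ m`.
If it vanishes then `x_i + x_j = 0` for all `i ≠ j`, and with three distinct indices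
`x_i = -x_j = x_k = -x_i`, so `x = 0`.
-/

open Finset Matrix

variable {ι : Type*} [Fintype ι] [LinearOrder ι]

theorem sum_erase_eq_sum_lt_add_swap {M : Type*} [AddCommMonoid M] (f : ι → ι → M) :
    ∑ i, ∑ j ∈ univ.erase i, f i j = ∑ i, ∑ j ∈ univ.filter (i < ·), (f i j + f j i) := by
  have split : ∀ i, ∑ j ∈ univ.erase i, f i j
      = ∑ j ∈ univ.filter (i < ·), f i j + ∑ j ∈ univ.filter (· < i), f i j := by
    intro i
    rw [← sum_union (disjoint_filter.2 fun j _ hij hji => lt_asymm hij hji)]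
    congr 1
    ext j
    simp [lt_or_lt_iff_ne, ne_comm]
  simp only [split, sum_add_distrib, sum_filter]
  rw [sum_comm (s := univ) (t := univ) (f := fun i j => if j < i then f i j else 0)]

theorem dotProduct_mulVec_eq_sum_lt_mul_add_sq {R : Type*} [CommRing R]
    {V : Matrix ι ι R} (hsym : V.IsSymm) (hdiag : ∀ i, V i i = ∑ j ∈ univ.erase i, V i j)
    (x : ι → R) :
    x ⬝ᵥ V *ᵥ x = ∑ i, ∑ j ∈ univ.filter (i < ·), V i j * (x i + x j) ^ 2 := by
  have offDiag : x ⬝ᵥ V *ᵥ x = ∑ i, ∑ j ∈ univ.erase i, V i j * (x i ^ 2 + x i * x j) := by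
    refine sum_congr rfl fun i _ => ?_
    rw [Matrix.mulVec, dotProduct, mul_sum, ← add_sum_erase _ _ (mem_univ i), hdiag i,
      sum_mul, mul_sum, ← sum_add_distrib]
    refine sum_congr rfl fun j _ => ?_
    ring
  rw [offDiag, sum_erase_eq_sum_lt_add_swap]
  refine sum_congr rfl fun i _ => sum_congr rfl fun j _ => ?_
  rw [hsym.apply i j]
  ring

theorem mul_sum_lt_add_sq_le_sum_lt {V : Matrix ι ι ℝ} {m : ℝ}
    (hbound : ∀ i j, i ≠ j → m ≤ V i j) (x : ι → ℝ) :
    m * ∑ i, ∑ j ∈ univ.filter (i < ·), (x i + x j) ^ 2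
      ≤ ∑ i, ∑ j ∈ univ.filter (i < ·), V i j * (x i + x j) ^ 2 := by
  simp only [mul_sum]
  refine sum_le_sum fun i _ => sum_le_sum fun j hj => ?_
  exact mul_le_mul_of_nonneg_right (hbound i j (mem_filter.mp hj).2.ne) (sq_nonneg _)

theorem add_eq_zero_of_sum_lt_eq_zero {V : Matrix ι ι ℝ} (hpos : ∀ i j, i ≠ j → 0 < V i j)
    {x : ι → ℝ} (hx : ∑ i, ∑ j ∈ univ.filter (i < ·), V i j * (x i + x j) ^ 2 = 0)
    {i j : ι} (hij : i < j) : x i + x j = 0 := by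
  have term_nonneg : ∀ i, ∀ j ∈ univ.filter (i < ·), 0 ≤ V i j * (x i + x j) ^ 2 :=
    fun i j hj => mul_nonneg (hpos i j (mem_filter.mp hj).2.ne).le (sq_nonneg _)
  have row_zero := (sum_eq_zero_iff_of_nonneg fun i _ => sum_nonneg (term_nonneg i)).mp hx i
    (mem_univ i)
  have term_zero := (sum_eq_zero_iff_of_nonneg (term_nonneg i)).mp row_zero j (by simpa using hij)
  exact pow_eq_zero_iff two_ne_zero |>.mp <|
    (mul_eq_zero.mp term_zero).resolve_left (hpos i j hij.ne).ne'

theorem eq_zero_of_forall_ne_add_eq_zero {κ : Type*} [Fintype κ] (hcard : 3 ≤ Fintype.card κ)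
    {x : κ → ℝ} (hx : ∀ i j, i ≠ j → x i + x j = 0) : x = 0 := by
  classical
  funext i
  have : 1 < (univ.erase i).card := by
    rw [card_erase_of_mem (mem_univ i), card_univ]
    omega
  obtain ⟨j, hj, k, hk, hjk⟩ := one_lt_card.mp this
  have hij := hx i j (ne_of_mem_erase hj).symm
  have hik := hx i k (ne_of_mem_erase hk).symm
  have hjk := hx j k hjk
  change x i = 0
  linarith

theorem matrix_class_pos_def_general (n : ℕ) (m : ℝ) (hm : 0 < m)
    (V : Matrix (Fin n) (Fin n) ℝ) (hsym : V.IsSymm)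
    (hdiag : ∀ i, V i i = ∑ j ∈ Finset.univ.erase i, V i j)
    (hbound : ∀ i j, i ≠ j → m ≤ V i j) :
    (∀ x : Fin n → ℝ,
      m * ∑ i, ∑ j ∈ Finset.univ.filter (fun j => i < j), (x i + x j) ^ 2 ≤
        dotProduct x (V.mulVec x)) ∧
    (3 ≤ n → (∀ x : Fin n → ℝ, dotProduct x (V.mulVec x) = 0 → x = 0) ∧
      V.PosDef ∧ IsUnit V) := by
  have lower_bound : ∀ x : Fin n → ℝ, m * ∑ i, ∑ j ∈ univ.filter (i < ·), (x i + x j) ^ 2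
      ≤ x ⬝ᵥ V *ᵥ x := fun x => by
    rw [dotProduct_mulVec_eq_sum_lt_mul_add_sq hsym hdiag]
    exact mul_sum_lt_add_sq_le_sum_lt hbound x
  refine ⟨lower_bound, fun h3 => ?_⟩
  have hpos : ∀ i j, i ≠ j → 0 < V i j := fun i j hij => hm.trans_le (hbound i j hij)
  have kernel : ∀ x : Fin n → ℝ, x ⬝ᵥ V *ᵥ x = 0 → x = 0 := fun x hx => by
    rw [dotProduct_mulVec_eq_sum_lt_mul_add_sq hsym hdiag] at hx
    refine eq_zero_of_forall_ne_add_eq_zero (by simpa using h3) fun i j hij => ?_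
    rcases hij.lt_or_gt with hij | hji
    · exact add_eq_zero_of_sum_lt_eq_zero hpos hx hij
    · exact add_comm (x i) (x j) ▸ add_eq_zero_of_sum_lt_eq_zero hpos hx hji
  have hposDef : V.PosDef := by
    refine .of_dotProduct_mulVec_pos (Matrix.isHermitian_iff_isSymm.mpr hsym) fun x hx => ?_
    have nonneg := (mul_nonneg hm.le (by positivity)).trans (lower_bound x)
    exact nonneg.lt_of_ne' (mt (kernel x) hx)
  exact ⟨kernel, hposDef, hposDef.isUnit⟩

theorem matrix_class_pos_def (n : ℕ) (hn : 2 ≤ n) (m : ℝ) (hm : 0 < m)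
    (V : Matrix (Fin n) (Fin n) ℝ) (hsym : V.IsSymm) (hpsd : V.PosSemidef)
    (hdiag : ∀ i, V i i = ∑ j ∈ Finset.univ.erase i, V i j)
    (hbound : ∀ i j, i ≠ j → m ≤ V i j) :
    (∀ x : Fin n → ℝ,
      m * ∑ i, ∑ j ∈ Finset.univ.filter (fun j => i < j), (x i + x j) ^ 2 ≤
        dotProduct x (V.mulVec x)) ∧
    (3 ≤ n → (∀ x : Fin n → ℝ, dotProduct x (V.mulVec x) = 0 → x = 0) ∧
      V.PosDef ∧ IsUnit V) :=
  matrix_class_pos_def_general n m hm V hsym hdiag hbound
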